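/- Let F denote the ℝ-linear bijection ψ: ℍ → ℝ^{1×4}, ψ(a+bi+cj+dk) = (a,b,c,d), extended entrywise to quaternionic row-vector polynomials (with central quaternion coefficients) into real row-vector polynomials. If I ⊆ H_c^{1×ℓ}⟨z,z*⟩ is a left module over H_c⟨z,z*⟩, then J = ψ(I) ⊆ R^{1×4ℓ}⟨x,x*⟩ is a left module over R⟨x,x*⟩; moreover, I is real if and only if J is real. -/

import Mathlib

open scoped BigOperators

namespace NSS

/-- Words in the `2g` free letters `x_1,…,x_g,x_1^*,…,x_g^*`
(a letter is a pair of an index and a `Bool`: `false` = unstarred, `true` = starred). -/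
abbrev Word (g : ℕ) := FreeMonoid (Fin g × Bool)

/-- The free `*`-algebra `ℝ⟨x,x*⟩`. -/
abbrev NC (g : ℕ) := MonoidAlgebra ℝ (Word g)

/-- `ν × ℓ` matrices of noncommutative polynomials. -/
abbrev NCMat (g ν ℓ : ℕ) := Matrix (Fin ν) (Fin ℓ) (NC g)

/-- The involution on words: reverse the word and swap starred/unstarred letters. -/
def wordStar {g : ℕ} (w : Word g) : Word g :=
  FreeMonoid.ofList (((FreeMonoid.toList w).map (fun p => (p.1, !p.2))).reverse)

/-- The involution on `ℝ⟨x,x*⟩`. -/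
noncomputable def ncStar {g : ℕ} (p : NC g) : NC g :=
  MonoidAlgebra.ofCoeff (Finsupp.mapDomain wordStar (p.coeff : Word g →₀ ℝ))

/-- The involution on matrix polynomials: transpose and apply `ncStar` entrywise. -/
noncomputable def matStar {g ν ℓ : ℕ} (p : NCMat g ν ℓ) : NCMat g ℓ ν :=
  Matrix.of fun i j => ncStar (p j i)

/-- The left action of a scalar polynomial on a matrix polynomial
(entrywise left multiplication, identifying `q` with `I ⊗ q`). -/
noncomputable def leftMul {g ν ℓ : ℕ} (q : NC g) (p : NCMat g ν ℓ) : NCMat g ν ℓ :=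
  Matrix.of fun i j => q * p i j

/-- A constant real matrix, viewed as a matrix of noncommutative polynomials. -/
noncomputable def constMat {g m n : ℕ} (A : Matrix (Fin m) (Fin n) ℝ) : NCMat g m n :=
  A.map (algebraMap ℝ (NC g))

/-- The space `ℝ^{ℓ×1}·I + I^*·ℝ^{1×ℓ}`. -/
noncomputable def realPart {g ℓ : ℕ} (I : Set (NCMat g 1 ℓ)) : Submodule ℝ (NCMat g ℓ ℓ) :=
  Submodule.span ℝ
    ({m | ∃ B : Matrix (Fin ℓ) (Fin 1) ℝ, ∃ a ∈ I, m = constMat B * a} ∪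
     {m | ∃ B : Matrix (Fin 1) (Fin ℓ) ℝ, ∃ a ∈ I, m = matStar a * constMat B})

/-- Left `ℝ⟨x,x*⟩`-submodules of `ℝ^{1×ℓ}⟨x,x*⟩`. -/
def IsLeftSubmodule {g ℓ : ℕ} (I : Set (NCMat g 1 ℓ)) : Prop :=
  0 ∈ I ∧ (∀ a b, a ∈ I → b ∈ I → a + b ∈ I) ∧
    (∀ (r : ℝ) a, a ∈ I → r • a ∈ I) ∧ ∀ (q : NC g) a, a ∈ I → leftMul q a ∈ I

/-- A left module `I` is *real* if any finite sum of hermitian squares lying in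
`ℝ^{ℓ×1}·I + I^*·ℝ^{1×ℓ}` has all its terms in `I`. -/
def IsReal {g ℓ : ℕ} (I : Set (NCMat g 1 ℓ)) : Prop :=
  ∀ (n : ℕ) (p : Fin n → NCMat g 1 ℓ),
    (∑ i, matStar (p i) * p i) ∈ realPart I → ∀ i, p i ∈ I

/-- The monomial `e_j ⊗ w ∈ ℝ^{1×ℓ}⟨x,x*⟩`. -/
noncomputable def rowMono {g ℓ : ℕ} (j : Fin ℓ) (w : Word g) : NCMat g 1 ℓ :=
  Matrix.of fun _ j' => if j' = j then (MonoidAlgebra.single w (1:ℝ) : NC g) else 0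

/-- The left `ℝ⟨x,x*⟩`-submodule generated by a set. -/
def leftSpan {g ℓ : ℕ} (G : Set (NCMat g 1 ℓ)) : Set (NCMat g 1 ℓ) :=
  ⋂₀ {J | IsLeftSubmodule J ∧ G ⊆ J}


/-! ### Quaternionic polynomials and the map ψ -/

/-- The free `*`-algebra over the quaternions `ℍ_c⟨z,z*⟩`, with letters commuting
with quaternion coefficients. -/
abbrev QNC (g : ℕ) := MonoidAlgebra (Quaternion ℝ) (Word g)

/-- Matrices of quaternionic noncommutative polynomials. -/
abbrev QMat (g ν ℓ : ℕ) := Matrix (Fin ν) (Fin ℓ) (QNC g)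

/-- The involution on `ℍ_c⟨z,z*⟩`: conjugate coefficients, reverse words, swap
`z_i ↔ z_i^*`. -/
noncomputable def qncStar {g : ℕ} (p : QNC g) : QNC g :=
  MonoidAlgebra.ofCoeff (Finsupp.mapDomain wordStar
    (Finsupp.mapRange (star : Quaternion ℝ → Quaternion ℝ) (star_zero _)
      (p.coeff : Word g →₀ Quaternion ℝ)))

/-- The involution on quaternionic matrix polynomials. -/
noncomputable def qmatStar {g ν ℓ : ℕ} (p : QMat g ν ℓ) : QMat g ℓ ν :=
  Matrix.of fun i j => qncStar (p j i)

/-- Left action of a scalar quaternionic polynomial. -/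
noncomputable def qleftMul {g ν ℓ : ℕ} (q : QNC g) (p : QMat g ν ℓ) : QMat g ν ℓ :=
  Matrix.of fun i j => q * p i j

/-- Left `ℍ_c⟨z,z*⟩`-submodules of `ℍ_c^{1×ℓ}⟨z,z*⟩`. -/
def IsLeftSubmoduleQ {g ℓ : ℕ} (I : Set (QMat g 1 ℓ)) : Prop :=
  0 ∈ I ∧ (∀ a b, a ∈ I → b ∈ I → a + b ∈ I) ∧
    ∀ (q : QNC g) a, a ∈ I → qleftMul q a ∈ I

/-- The space spanned by `q*r + r*q` with `r ∈ I`. -/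
noncomputable def qRealPart {g ℓ : ℕ} (I : Set (QMat g 1 ℓ)) : Submodule ℝ (QMat g ℓ ℓ) :=
  Submodule.span ℝ
    {m | ∃ q : QMat g 1 ℓ, ∃ r ∈ I, m = qmatStar q * r + qmatStar r * q}

/-- Real left module, quaternionic version. -/
def IsRealQ {g ℓ : ℕ} (I : Set (QMat g 1 ℓ)) : Prop :=
  ∀ (n : ℕ) (p : Fin n → QMat g 1 ℓ),
    (∑ i, qmatStar (p i) * p i) ∈ qRealPart I → ∀ i, p i ∈ I

/-- `ψ : ℍ → ℝ^{1×4}`, `ψ(a+bi+cj+dk) = (a,b,c,d)`. -/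
noncomputable def psi0 (q : Quaternion ℝ) : Fin 4 → ℝ := ![q.re, q.imI, q.imJ, q.imK]

lemma psi0_zero (r : Fin 4) : psi0 0 r = 0 := by
  fin_cases r <;> rfl

/-- `ψ` applied coefficientwise to a quaternionic polynomial (`r`-th real component),
renaming the letters `z ↦ x`. -/
noncomputable def psiNC {g : ℕ} (p : QNC g) (r : Fin 4) : NC g :=
  MonoidAlgebra.ofCoeff
    (Finsupp.mapRange (fun q => psi0 q r) (psi0_zero r) (p.coeff : Word g →₀ Quaternion ℝ))

/-- The entrywise extension of `ψ` mapping `ℍ_c^{1×ℓ}⟨z,z*⟩` into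
`ℝ^{1×4ℓ}⟨x,x*⟩` (columns indexed by `Fin ℓ × Fin 4`). -/
noncomputable def Psi {g ℓ : ℕ} (p : QMat g 1 ℓ) : Matrix (Fin 1) (Fin ℓ × Fin 4) (NC g) :=
  Matrix.of fun _ jr => psiNC (p 0 jr.1) jr.2

/-! ### Real-coefficient notions, with general column index type -/

/-- Involution on matrices over `ℝ⟨x,x*⟩` with general index types. -/
noncomputable def matStarG {g : ℕ} {m n : Type} (p : Matrix m n (NC g)) :
    Matrix n m (NC g) :=
  Matrix.of fun i j => ncStar (p j i)

/-- Left action, general column index type. -/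
noncomputable def leftMulG {g : ℕ} {m n : Type} (q : NC g) (p : Matrix m n (NC g)) :
    Matrix m n (NC g) :=
  Matrix.of fun i j => q * p i j

/-- Left `ℝ⟨x,x*⟩`-submodules of row polynomials with column type `c`. -/
def IsLeftSubmoduleG {g : ℕ} {c : Type} (I : Set (Matrix (Fin 1) c (NC g))) : Prop :=
  0 ∈ I ∧ (∀ a b, a ∈ I → b ∈ I → a + b ∈ I) ∧
    (∀ (r : ℝ) a, a ∈ I → r • a ∈ I) ∧ ∀ (q : NC g) a, a ∈ I → leftMulG q a ∈ I

/-- The space `ℝ^{c×1}·I + I*·ℝ^{1×c}`, general column index type. -/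
noncomputable def realPartG {g : ℕ} {c : Type} [Fintype c] [DecidableEq c]
    (I : Set (Matrix (Fin 1) c (NC g))) : Submodule ℝ (Matrix c c (NC g)) :=
  Submodule.span ℝ
    ({m | ∃ B : Matrix c (Fin 1) ℝ, ∃ a ∈ I, m = B.map (algebraMap ℝ (NC g)) * a} ∪
     {m | ∃ B : Matrix (Fin 1) c ℝ, ∃ a ∈ I, m = matStarG a * B.map (algebraMap ℝ (NC g))})

/-- Real left module, general column index type. -/
def IsRealG {g : ℕ} {c : Type} [Fintype c] [DecidableEq c]
    (I : Set (Matrix (Fin 1) c (NC g))) : Prop :=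
  ∀ (n : ℕ) (p : Fin n → Matrix (Fin 1) c (NC g)),
    (∑ i, matStarG (p i) * p i) ∈ realPartG I → ∀ i, p i ∈ I

/-!
`ψ` is an `ℝ`-linear bijection `ℍ^{1×ℓ}⟨z,z*⟩ → ℝ^{1×4ℓ}⟨x,x*⟩`, with inverse
`(q_{j,c}) ↦ (Σ_c e_c q_{j,c})_j` for `e = (1, i, j, k)`, and it commutes with left multiplication
by real polynomials; this gives the module statement.

For realness, sums of hermitian squares and real parts are moved back and forth by two maps.
The block map `Φ` replaces each quaternion coefficient `a` by the real `4 × 4` matrix `φ(a)` with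
rows `ψ(a), ψ(ia), ψ(ja), ψ(ka)`. The identity `φ(a*b) = φ(a)ᵀφ(b)` gives
`Φ(p*q) = Σ_c ψ(e_c p)* ψ(e_c q)`, so `Φ` sends `Σ p_i*p_i` to a sum of hermitian squares that
has `ψ(p_i)` among its terms, and sends the real part of `I` into that of `J`.
In the other direction, the assembly map `m ↦ (Σ_{r,s} ē_r e_s m_{(j,r),(k,s)})_{j,k}` sends
`P*Q` to `ψ⁻¹(P)* ψ⁻¹(Q)`. After adding its adjoint, it sends the real part of `J` into that of
`I` and `Σ P_i*P_i` to twice `Σ ψ⁻¹(P_i)* ψ⁻¹(P_i)`.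
-/

open MonoidAlgebra
open scoped Matrix

section WordStar

variable {g : ℕ}

lemma wordStar_mul (u v : Word g) : wordStar (u * v) = wordStar v * wordStar u := by
  simp [wordStar]

lemma wordStar_one : wordStar (1 : Word g) = 1 := rfl

lemma wordStar_wordStar (w : Word g) : wordStar (wordStar w) = w := by
  simp [wordStar, Function.comp_def]

variable {R : Type*} [Semiring R] [StarRing R]

noncomputable instance : Star (MonoidAlgebra R (Word g)) where
  star p := ofCoeff (Finsupp.mapDomain wordStar (Finsupp.mapRange star (star_zero _) p.coeff))

lemma star_single (w : Word g) (a : R) :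
    star (single w a : MonoidAlgebra R (Word g)) = single (wordStar w) (star a) := by
  simp [star]

private lemma star_add' (p q : MonoidAlgebra R (Word g)) : star (p + q) = star p + star q := by
  simp only [star, coeff_add, Finsupp.mapRange_add (fun a b : R => star_add a b),
    Finsupp.mapDomain_add, ofCoeff_add]

noncomputable instance : StarRing (MonoidAlgebra R (Word g)) where
  star_involutive p := by
    induction p using MonoidAlgebra.induction_linear with
    | zero => simp [star]
    | add p q hp hq => rw [star_add', star_add', hp, hq]
    | single w a => rw [star_single, star_single, wordStar_wordStar, star_star]
  star_mul p q := by
    induction p using MonoidAlgebra.induction_linear with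
    | zero => simp [star]
    | add p p' hp hp' => rw [add_mul, star_add', hp, hp', star_add', mul_add]
    | single w a =>
      induction q using MonoidAlgebra.induction_linear with
      | zero => simp [star]
      | add q q' hq hq' => rw [mul_add, star_add', hq, hq', star_add', add_mul]
      | single v b => simp only [single_mul_single, star_single, wordStar_mul, star_mul]
  star_add := star_add'

end WordStar

noncomputable instance {g : ℕ} : StarModule ℝ (QNC g) where
  star_smul x p := by
    induction p using MonoidAlgebra.induction_linear with
    | zero => simp
    | add p q hp hq => rw [smul_add, star_add, hp, hq, star_add, smul_add]
    | single w a => simp only [smul_single, star_single, Quaternion.star_smul, star_trivial]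

lemma single_finsetSum {R M ι : Type*} [Semiring R] (m : M) (s : Finset ι) (f : ι → R) :
    single m (∑ i ∈ s, f i) = ∑ i ∈ s, single m (f i) :=
  map_sum (singleAddHom m) f s

section Coordinates

def quatUnit : Fin 4 → Quaternion ℝ := ![1, ⟨0, 1, 0, 0⟩, ⟨0, 0, 1, 0⟩, ⟨0, 0, 0, 1⟩]

@[simp] lemma quatUnit_re (c : Fin 4) : (quatUnit c).re = ![1, 0, 0, 0] c := by
  fin_cases c <;> rfl
@[simp] lemma quatUnit_imI (c : Fin 4) : (quatUnit c).imI = ![0, 1, 0, 0] c := by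
  fin_cases c <;> rfl
@[simp] lemma quatUnit_imJ (c : Fin 4) : (quatUnit c).imJ = ![0, 0, 1, 0] c := by
  fin_cases c <;> rfl
@[simp] lemma quatUnit_imK (c : Fin 4) : (quatUnit c).imK = ![0, 0, 0, 1] c := by
  fin_cases c <;> rfl

lemma psi0_quatUnit (c : Fin 4) : psi0 (quatUnit c) = Pi.single c 1 := by
  funext r; fin_cases c <;> fin_cases r <;> simp [psi0]

lemma sum_psi0_smul_quatUnit (a : Quaternion ℝ) : ∑ c, psi0 a c • quatUnit c = a := by
  ext <;> simp [psi0, Fin.sum_univ_four]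

noncomputable def psiLinear (r : Fin 4) : Quaternion ℝ →ₗ[ℝ] ℝ where
  toFun q := psi0 q r
  map_add' a b := by fin_cases r <;> simp [psi0]
  map_smul' x a := by fin_cases r <;> simp [psi0]

noncomputable def phi (a : Quaternion ℝ) : Matrix (Fin 4) (Fin 4) ℝ :=
  Matrix.of fun c r => psi0 (quatUnit c * a) r

lemma phi_eq (a : Quaternion ℝ) :
    phi a = !![a.re, a.imI, a.imJ, a.imK; -a.imI, a.re, -a.imK, a.imJ;
      -a.imJ, a.imK, a.re, -a.imI; -a.imK, -a.imJ, a.imI, a.re] := by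
  ext c r
  fin_cases c <;> fin_cases r <;>
    simp [phi, psi0, Quaternion.re_mul, Quaternion.imI_mul, Quaternion.imJ_mul, Quaternion.imK_mul]

lemma phi_star_mul (a b : Quaternion ℝ) : phi (star a * b) = (phi a)ᵀ * phi b := by
  rw [phi_eq, phi_eq, phi_eq]
  ext r s
  fin_cases r <;> fin_cases s <;>
    simp [Matrix.mul_apply, Fin.sum_univ_four, Quaternion.re_mul, Quaternion.imI_mul,
      Quaternion.imJ_mul, Quaternion.imK_mul] <;> ring

end Coordinates

section Polynomials

variable {g : ℕ}

lemma ncStar_eq_star (p : NC g) : ncStar p = star p := by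
  have h : Finsupp.mapRange (star : ℝ → ℝ) (star_zero _) p.coeff = p.coeff :=
    Finsupp.ext fun _ => by simp
  rw [ncStar]
  exact congrArg (fun f => ofCoeff (Finsupp.mapDomain wordStar f)) h.symm

noncomputable def toQNC : NC g →ₐ[ℝ] QNC g := mapAlgHom _ (Algebra.ofId ℝ (Quaternion ℝ))

@[simp] lemma toQNC_single (w : Word g) (x : ℝ) :
    toQNC (single w x) = single w (algebraMap ℝ (Quaternion ℝ) x) :=
  mapAlgHom_single _ _ _

lemma star_toQNC (p : NC g) : star (toQNC p) = toQNC (star p) := by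
  induction p using MonoidAlgebra.induction_linear with
  | zero => simp
  | add p q hp hq => rw [map_add, star_add, hp, hq, star_add, map_add]
  | single w x => simp [star_single]

lemma commute_single_one_toQNC (c : Quaternion ℝ) (p : NC g) :
    Commute (single 1 c) (toQNC p) := by
  induction p using MonoidAlgebra.induction_linear with
  | zero => simp
  | add p q hp hq => rw [map_add]; exact hp.add_right hq
  | single w x => simp [Commute, SemiconjBy, single_mul_single, Quaternion.coe_commutes]

lemma psiNC_eq_map (p : QNC g) (r : Fin 4) :
    psiNC p r = MonoidAlgebra.map (psiLinear r).toAddMonoidHom p := rfl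

@[simp] lemma psiNC_single (w : Word g) (a : Quaternion ℝ) (r : Fin 4) :
    psiNC (single w a) r = single w (psi0 a r) :=
  MonoidAlgebra.map_single (psiLinear r).toAddMonoidHom a w

lemma psiNC_add (p q : QNC g) (r : Fin 4) : psiNC (p + q) r = psiNC p r + psiNC q r :=
  MonoidAlgebra.map_add (psiLinear r).toAddMonoidHom p q

lemma psiNC_sum {ι : Type*} (s : Finset ι) (p : ι → QNC g) (r : Fin 4) :
    psiNC (∑ i ∈ s, p i) r = ∑ i ∈ s, psiNC (p i) r :=
  MonoidAlgebra.map_sum (psiLinear r).toAddMonoidHom s p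

lemma psiNC_smul (x : ℝ) (p : QNC g) (r : Fin 4) : psiNC (x • p) r = x • psiNC p r := by
  ext w; simp [psiNC_eq_map]

lemma psi0_coe_mul (x : ℝ) (a : Quaternion ℝ) (r : Fin 4) : psi0 (x * a) r = x * psi0 a r := by
  rw [Quaternion.coe_mul_eq_smul]; exact (psiLinear r).map_smul x a

lemma psiNC_toQNC_mul (q : NC g) (p : QNC g) (r : Fin 4) :
    psiNC (toQNC q * p) r = q * psiNC p r := by
  induction q using MonoidAlgebra.induction_linear with
  | zero => simp [psiNC_eq_map]
  | add q q' hq hq' => rw [map_add, add_mul, psiNC_add, hq, hq', add_mul]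
  | single w x =>
    induction p using MonoidAlgebra.induction_linear with
    | zero => simp [psiNC_eq_map]
    | add p p' hp hp' => rw [mul_add, psiNC_add, hp, hp', psiNC_add, mul_add]
    | single v a => simp [single_mul_single, psi0_coe_mul]

lemma psiNC_single_one_mul_toQNC (u : Quaternion ℝ) (q : NC g) (r : Fin 4) :
    psiNC (single 1 u * toQNC q) r = psi0 u r • q := by
  rw [(commute_single_one_toQNC u q).eq, psiNC_toQNC_mul, psiNC_single, Algebra.smul_def,
    Algebra.commutes]
  rfl

lemma star_single_one (c : Quaternion ℝ) : star (single 1 c : QNC g) = single 1 (star c) := by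
  rw [star_single, wordStar_one]

noncomputable def ofComponents (x : Fin 4 → NC g) : QNC g :=
  ∑ c, single 1 (quatUnit c) * toQNC (x c)

lemma psiNC_ofComponents (x : Fin 4 → NC g) (r : Fin 4) : psiNC (ofComponents x) r = x r := by
  simp [ofComponents, psiNC_sum, psiNC_single_one_mul_toQNC, psi0_quatUnit, Pi.single_apply]

lemma ofComponents_psiNC (p : QNC g) : ofComponents (psiNC p) = p := by
  induction p using MonoidAlgebra.induction_linear with
  | zero => simp [ofComponents, psiNC_eq_map]
  | add p q hp hq =>
    simp only [ofComponents, psiNC_add, map_add, mul_add, Finset.sum_add_distrib] at hp hq ⊢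
    rw [hp, hq]
  | single w a =>
    simp [ofComponents, single_mul_single, ← single_finsetSum, Quaternion.mul_coe_eq_smul,
      sum_psi0_smul_quatUnit]

lemma star_ofComponents_mul_ofComponents (x y : Fin 4 → NC g) :
    star (ofComponents x) * ofComponents y =
      ∑ r, ∑ s, single 1 (star (quatUnit r) * quatUnit s) * toQNC (star (x r) * y s) := by
  simp only [ofComponents, star_sum, star_mul, star_toQNC, star_single_one, Finset.sum_mul_sum]
  refine Finset.sum_congr rfl fun r _ => Finset.sum_congr rfl fun s _ => ?_
  have hc : (single 1 (star (quatUnit r) * quatUnit s) : QNC g) =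
      single 1 (star (quatUnit r)) * single 1 (quatUnit s) := by
    rw [single_mul_single, one_mul]
  rw [hc, map_mul, ← (commute_single_one_toQNC _ _).eq, mul_assoc,
    ← mul_assoc _ (single 1 _), ← (commute_single_one_toQNC _ _).eq]
  simp only [mul_assoc]

lemma psiNC_quatUnit_mul_star_mul (x y : QNC g) (r s : Fin 4) :
    psiNC (single 1 (quatUnit r) * (star x * y)) s =
      ∑ c, star (psiNC (single 1 (quatUnit c) * x) r) * psiNC (single 1 (quatUnit c) * y) s := by
  induction x using MonoidAlgebra.induction_linear with
  | zero => simp [psiNC_eq_map]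
  | add x x' hx hx' =>
    simp only [star_add, add_mul, mul_add, psiNC_add, star_add, Finset.sum_add_distrib, hx, hx']
  | single u a =>
    induction y using MonoidAlgebra.induction_linear with
    | zero => simp [psiNC_eq_map]
    | add y y' hy hy' => simp only [mul_add, psiNC_add, Finset.sum_add_distrib, hy, hy']
    | single v b =>
      have h := congrFun (congrFun (phi_star_mul a b) r) s
      simp only [phi, Matrix.mul_apply, Matrix.transpose_apply, Matrix.of_apply] at h
      simp only [star_single, single_mul_single, one_mul, psiNC_single, star_trivial]
      rw [← single_finsetSum, h]

end Polynomials

section Rows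

variable {g ℓ : ℕ}

lemma matStarG_eq_conjTranspose {m n : Type} (p : Matrix m n (NC g)) : matStarG p = pᴴ := by
  ext i j; simp [matStarG, ncStar_eq_star]

lemma qmatStar_eq_conjTranspose {ν : ℕ} (p : QMat g ν ℓ) : qmatStar p = pᴴ := rfl

noncomputable def Theta (P : Matrix (Fin 1) (Fin ℓ × Fin 4) (NC g)) : QMat g 1 ℓ :=
  Matrix.of fun _ j => ofComponents fun c => P 0 (j, c)

lemma Psi_Theta (P : Matrix (Fin 1) (Fin ℓ × Fin 4) (NC g)) : Psi (Theta P) = P := by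
  ext i ⟨j, r⟩
  fin_cases i
  simp [Psi, Theta, psiNC_ofComponents]

lemma Theta_Psi (p : QMat g 1 ℓ) : Theta (Psi p) = p := by
  ext i j : 1
  fin_cases i
  exact ofComponents_psiNC (p 0 j)

lemma Psi_injective : Function.Injective (Psi : QMat g 1 ℓ → _) :=
  Function.LeftInverse.injective Theta_Psi

lemma Psi_zero : Psi (0 : QMat g 1 ℓ) = 0 := by
  ext; simp [Psi, psiNC_eq_map]

lemma Psi_add (p q : QMat g 1 ℓ) : Psi (p + q) = Psi p + Psi q := by
  ext; simp [Psi, psiNC_add]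

lemma Psi_smul (x : ℝ) (p : QMat g 1 ℓ) : Psi (x • p) = x • Psi p := by
  ext; simp [Psi, psiNC_smul]

lemma Psi_qleftMul_toQNC (q : NC g) (p : QMat g 1 ℓ) :
    Psi (qleftMul (toQNC q) p) = leftMulG q (Psi p) := by
  ext; simp [Psi, qleftMul, leftMulG, psiNC_toQNC_mul]

lemma qleftMul_one {ν : ℕ} (p : QMat g ν ℓ) : qleftMul 1 p = p := by
  ext : 1; simp [qleftMul]

lemma qleftMul_algebraMap {ν : ℕ} (x : ℝ) (p : QMat g ν ℓ) :
    qleftMul (algebraMap ℝ (QNC g) x) p = x • p := by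
  ext : 1; simp [qleftMul, Algebra.smul_def]

lemma isLeftSubmoduleG_image_Psi {I : Set (QMat g 1 ℓ)} (hI : IsLeftSubmoduleQ I) :
    IsLeftSubmoduleG (Psi '' I) := by
  obtain ⟨hzero, hadd, hmul⟩ := hI
  refine ⟨⟨0, hzero, Psi_zero⟩, ?_, ?_, ?_⟩
  · rintro _ _ ⟨p, hp, rfl⟩ ⟨q, hq, rfl⟩
    exact ⟨p + q, hadd p q hp hq, Psi_add p q⟩
  · rintro x _ ⟨p, hp, rfl⟩
    refine ⟨x • p, ?_, Psi_smul x p⟩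
    rw [← qleftMul_algebraMap]
    exact hmul _ p hp
  · rintro q _ ⟨p, hp, rfl⟩
    exact ⟨_, hmul (toQNC q) p hp, Psi_qleftMul_toQNC q p⟩

end Rows

section BlockMaps

variable {g ℓ : ℕ}

noncomputable def Phi :
    Matrix (Fin ℓ) (Fin ℓ) (QNC g) →ₗ[ℝ] Matrix (Fin ℓ × Fin 4) (Fin ℓ × Fin 4) (NC g) where
  toFun m := Matrix.of fun jr ks => psiNC (single 1 (quatUnit jr.2) * m jr.1 ks.1) ks.2
  map_add' m m' := by ext; simp [mul_add, psiNC_add]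
  map_smul' x m := by ext; simp [psiNC_smul]

lemma Phi_conjTranspose_mul (p q : QMat g 1 ℓ) :
    Phi (pᴴ * q) = ∑ c, (Psi (qleftMul (single 1 (quatUnit c)) p))ᴴ *
      Psi (qleftMul (single 1 (quatUnit c)) q) := by
  ext ⟨j, r⟩ ⟨k, s⟩
  simp [Phi, Psi, qleftMul, Matrix.mul_apply, Matrix.sum_apply, psiNC_quatUnit_mul_star_mul]

noncomputable def assemble :
    Matrix (Fin ℓ × Fin 4) (Fin ℓ × Fin 4) (NC g) →ₗ[ℝ] Matrix (Fin ℓ) (Fin ℓ) (QNC g) where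
  toFun m := Matrix.of fun j k =>
    ∑ r, ∑ s, single 1 (star (quatUnit r) * quatUnit s) * toQNC (m (j, r) (k, s))
  map_add' m m' := by ext : 1; simp [mul_add, Finset.sum_add_distrib]
  map_smul' x m := by ext : 1; simp [Finset.smul_sum]

lemma assemble_conjTranspose_mul (P Q : Matrix (Fin 1) (Fin ℓ × Fin 4) (NC g)) :
    assemble (Pᴴ * Q) = (Theta P)ᴴ * Theta Q := by
  ext j k : 1
  simp [assemble, Theta, Matrix.mul_apply, star_ofComponents_mul_ofComponents]

end BlockMaps

section RealParts

variable {g : ℕ} {c : Type} [Fintype c] [DecidableEq c] {J : Set (Matrix (Fin 1) c (NC g))}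

lemma conjTranspose_map_algebraMap {m n : Type} (B : Matrix m n ℝ) :
    (B.map (algebraMap ℝ (NC g)))ᴴ = Bᵀ.map (algebraMap ℝ (NC g)) := by
  ext : 1; simp [star_single, wordStar_one]

lemma map_algebraMap_mul_mem_realPartG (B : Matrix c (Fin 1) ℝ) {a : Matrix (Fin 1) c (NC g)}
    (ha : a ∈ J) : B.map (algebraMap ℝ (NC g)) * a ∈ realPartG J :=
  Submodule.subset_span (Or.inl ⟨B, a, ha, rfl⟩)

lemma conjTranspose_mul_map_algebraMap_mem_realPartG (B : Matrix (Fin 1) c ℝ)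
    {a : Matrix (Fin 1) c (NC g)} (ha : a ∈ J) :
    aᴴ * B.map (algebraMap ℝ (NC g)) ∈ realPartG J :=
  Submodule.subset_span (Or.inr ⟨B, a, ha, by rw [matStarG_eq_conjTranspose]⟩)

lemma conjTranspose_mul_eq_sum (Q R : Matrix (Fin 1) c (NC g)) :
    Qᴴ * R = ∑ k, (Matrix.single k (0 : Fin 1) (1 : ℝ)).map (algebraMap ℝ (NC g)) *
      leftMulG (star (Q 0 k)) R := by
  ext u v : 1
  simp [Matrix.mul_apply, Matrix.sum_apply, leftMulG, Matrix.single_apply,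
    apply_ite (single (1 : Word g)), ← one_def]

lemma conjTranspose_mul_mem_realPartG_of_right_mem (hJ : IsLeftSubmoduleG J)
    (Q : Matrix (Fin 1) c (NC g)) {R : Matrix (Fin 1) c (NC g)} (hR : R ∈ J) :
    Qᴴ * R ∈ realPartG J := by
  rw [conjTranspose_mul_eq_sum]
  exact Submodule.sum_mem _ fun k _ => map_algebraMap_mul_mem_realPartG _ (hJ.2.2.2 _ _ hR)

lemma conjTranspose_mul_mem_realPartG_of_left_mem (hJ : IsLeftSubmoduleG J)
    (Q : Matrix (Fin 1) c (NC g)) {R : Matrix (Fin 1) c (NC g)} (hR : R ∈ J) :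
    Rᴴ * Q ∈ realPartG J := by
  rw [← Matrix.conjTranspose_conjTranspose (Rᴴ * Q), Matrix.conjTranspose_mul,
    Matrix.conjTranspose_conjTranspose, conjTranspose_mul_eq_sum, Matrix.conjTranspose_sum]
  refine Submodule.sum_mem _ fun k _ => ?_
  rw [Matrix.conjTranspose_mul, conjTranspose_map_algebraMap]
  exact conjTranspose_mul_map_algebraMap_mem_realPartG _ (hJ.2.2.2 _ _ hR)

lemma IsRealG.mem_of_sum_mem (hJ : IsRealG J) {ι : Type*} [Fintype ι]
    (P : ι → Matrix (Fin 1) c (NC g)) (hP : ∑ i, matStarG (P i) * P i ∈ realPartG J) (i : ι) :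
    P i ∈ J := by
  let e := Fintype.equivFin ι
  have hPe : ∑ t, matStarG (P (e.symm t)) * P (e.symm t) ∈ realPartG J := by
    rwa [e.symm.sum_comp fun i => matStarG (P i) * P i]
  simpa using hJ _ (P ∘ e.symm) hPe (e i)

end RealParts

section Transfer

variable {g ℓ : ℕ} {I : Set (QMat g 1 ℓ)}

lemma Phi_mem_realPartG (hI : IsLeftSubmoduleQ I) {m : Matrix (Fin ℓ) (Fin ℓ) (QNC g)}
    (hm : m ∈ qRealPart I) : Phi m ∈ realPartG (Psi '' I) := by
  have hJ := isLeftSubmoduleG_image_Psi hI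
  refine (Submodule.span_le (p := (realPartG (Psi '' I)).comap Phi)).2 ?_ hm
  rintro _ ⟨q, r, hr, rfl⟩
  have hmem (c : Fin 4) : Psi (qleftMul (single 1 (quatUnit c)) r) ∈ Psi '' I :=
    ⟨_, hI.2.2 _ _ hr, rfl⟩
  simp only [SetLike.mem_coe, Submodule.mem_comap, map_add, qmatStar_eq_conjTranspose,
    Phi_conjTranspose_mul]
  exact add_mem
    (sum_mem fun c _ => conjTranspose_mul_mem_realPartG_of_right_mem hJ _ (hmem c))
    (sum_mem fun c _ => conjTranspose_mul_mem_realPartG_of_left_mem hJ _ (hmem c))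

lemma assemble_add_conjTranspose_mem_qRealPart
    {m : Matrix (Fin ℓ × Fin 4) (Fin ℓ × Fin 4) (NC g)} (hm : m ∈ realPartG (Psi '' I)) :
    assemble m + (assemble m)ᴴ ∈ qRealPart I := by
  have key (P Q : Matrix (Fin 1) (Fin ℓ × Fin 4) (NC g)) :
      assemble (Pᴴ * Q) + (assemble (Pᴴ * Q))ᴴ = (Theta P)ᴴ * Theta Q + (Theta Q)ᴴ * Theta P := by
    rw [assemble_conjTranspose_mul, Matrix.conjTranspose_mul, Matrix.conjTranspose_conjTranspose]
  induction hm using Submodule.span_induction with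
  | mem x hx =>
    rcases hx with ⟨B, _, ⟨r, hr, rfl⟩, rfl⟩ | ⟨B, _, ⟨r, hr, rfl⟩, rfl⟩
    · rw [← B.transpose_transpose, ← conjTranspose_map_algebraMap, key, Theta_Psi]
      exact Submodule.subset_span ⟨_, r, hr, rfl⟩
    · rw [matStarG_eq_conjTranspose, key, Theta_Psi, add_comm]
      exact Submodule.subset_span ⟨_, r, hr, rfl⟩
  | zero => simp
  | add x y _ _ hx hy =>
    rw [map_add, Matrix.conjTranspose_add, add_add_add_comm]
    exact add_mem hx hy
  | smul a x _ hx =>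
    rw [map_smul, Matrix.conjTranspose_smul, star_trivial, ← smul_add]
    exact Submodule.smul_mem _ a hx

lemma isRealG_image_Psi (h : IsRealQ I) : IsRealG (Psi '' I) := by
  intro n P hP i
  let p i := Theta (P i)
  have hsum : assemble (∑ i, matStarG (P i) * P i) = ∑ i, (p i)ᴴ * p i := by
    simp [p, matStarG_eq_conjTranspose, assemble_conjTranspose_mul]
  have hherm : (∑ i, (p i)ᴴ * p i)ᴴ = ∑ i, (p i)ᴴ * p i := by
    simp [Matrix.conjTranspose_sum, Matrix.conjTranspose_mul]
  have h2 := assemble_add_conjTranspose_mem_qRealPart hP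
  rw [hsum, hherm, ← two_smul ℝ, Submodule.smul_mem_iff _ two_ne_zero] at h2
  exact ⟨p i, h n p h2 i, Psi_Theta (P i)⟩

lemma isRealQ_of_isRealG_image_Psi (hI : IsLeftSubmoduleQ I) (h : IsRealG (Psi '' I)) :
    IsRealQ I := by
  intro n p hp i
  have hPhi := Phi_mem_realPartG hI hp
  simp only [map_sum, qmatStar_eq_conjTranspose, Phi_conjTranspose_mul] at hPhi
  rw [← Fintype.sum_prod_type'] at hPhi
  have hi := h.mem_of_sum_mem
    (fun ic : Fin n × Fin 4 => Psi (qleftMul (single 1 (quatUnit ic.2)) (p ic.1)))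
    (by simpa [matStarG_eq_conjTranspose] using hPhi) (i, 0)
  rwa [show quatUnit 0 = 1 from rfl, ← one_def, qleftMul_one, Psi_injective.mem_set_image] at hi

end Transfer

/-- if `I ⊆ ℍ_c^{1×ℓ}⟨z,z*⟩` is a left module, then `J = ψ(I)` is a left
`ℝ⟨x,x*⟩`-module, and `I` is real iff `J` is real. -/
theorem stmt17 {g ℓ : ℕ} (I : Set (QMat g 1 ℓ)) (hI : IsLeftSubmoduleQ I) :
    IsLeftSubmoduleG (Psi '' I) ∧ (IsRealQ I ↔ IsRealG (Psi '' I)) :=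
  ⟨isLeftSubmoduleG_image_Psi hI, isRealG_image_Psi, isRealQ_of_isRealG_image_Psi hI⟩

end NSS
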